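/- arXiv:2311.00109 — 3 statements merged into one kernel-verified Lean document; each statement's English description precedes it below -/
import Mathlib

section
/- Consider a dataset of n samples with protected attributes d : {1,…,n} → 𝒟 and labels y : {1,…,n} → 𝒴 (𝒟, 𝒴 finite and nonempty), and nonnegative weights θ : {1,…,n} → ℝ such that for every d₀ ∈ 𝒟 and y₀ ∈ 𝒴 the sums Σ_{i : d_i = d₀} θ_i and Σ_{i : d_i = d₀, y_i = y₀} θ_i are positive. Let ε̄ ≥ 0 and suppose t : 𝒴 → ℝ has positive values and J(p_{θ}(y₀|d₀), t_{y₀}) ≤ ε̄ for all d₀ ∈ 𝒟 and y₀ ∈ 𝒴, where p_{θ}(y₀|d₀) = (Σ_{i : d_i = d₀, y_i = y₀} θ_i)/(Σ_{i : d_i = d₀} θ_i). Then J(p_{θ}(y₀|d₁), p_{θ}(y₀|d₂)) ≤ (1+ε̄)² − 1 for all d₁, d₂ ∈ 𝒟 and y₀ ∈ 𝒴. -/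
open Finset

/-- The symmetric probability ratio measure `J(p, q) = max{p/q − 1, q/p − 1}`. -/
noncomputable def ratioJ (p q : ℝ) : ℝ := max (p / q - 1) (q / p - 1)

/-- The reweighted conditional distribution
`p_θ(y₀|d₀) = (Σ_{i : dᵢ = d₀, yᵢ = y₀} θᵢ)/(Σ_{i : dᵢ = d₀} θᵢ)`. -/
noncomputable def pcond {D Y : Type*} [DecidableEq D] [DecidableEq Y] {n : ℕ}
    (d : Fin n → D) (y : Fin n → Y) (θ : Fin n → ℝ) (y₀ : Y) (d₀ : D) : ℝ :=
  (∑ i ∈ univ.filter (fun i => d i = d₀ ∧ y i = y₀), θ i) /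
    (∑ i ∈ univ.filter (fun i => d i = d₀), θ i)

/-- if `J(p_θ(y₀|d₀), t_{y₀}) ≤ ε̄` for all `d₀, y₀`, then
`J(p_θ(y₀|d₁), p_θ(y₀|d₂)) ≤ (1+ε̄)² − 1` for all `d₁, d₂, y₀`. -/
theorem stmt17 {D Y : Type*} [Fintype D] [Fintype Y] [Nonempty D] [Nonempty Y]
    [DecidableEq D] [DecidableEq Y]
    (n : ℕ) (d : Fin n → D) (y : Fin n → Y) (θ : Fin n → ℝ) (hθ : ∀ i, 0 ≤ θ i)
    (hden : ∀ d₀ : D, 0 < ∑ i ∈ univ.filter (fun i => d i = d₀), θ i)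
    (hnum : ∀ (d₀ : D) (y₀ : Y),
      0 < ∑ i ∈ univ.filter (fun i => d i = d₀ ∧ y i = y₀), θ i)
    (εbar : ℝ) (hεbar : 0 ≤ εbar) (t : Y → ℝ) (ht : ∀ y₀, 0 < t y₀)
    (hJ : ∀ (d₀ : D) (y₀ : Y), ratioJ (pcond d y θ y₀ d₀) (t y₀) ≤ εbar) :
    ∀ (d₁ d₂ : D) (y₀ : Y),
      ratioJ (pcond d y θ y₀ d₁) (pcond d y θ y₀ d₂) ≤ (1 + εbar) ^ 2 - 1 := by
  intro d₁ d₂ y₀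
  have hp : ∀ d₀ : D, 0 < pcond d y θ y₀ d₀ := fun d₀ =>
    div_pos (hnum d₀ y₀) (hden d₀)
  have ht0 := ht y₀
  have key : ∀ d₀ : D, pcond d y θ y₀ d₀ / t y₀ ≤ 1 + εbar ∧
      t y₀ / pcond d y θ y₀ d₀ ≤ 1 + εbar := by
    intro d₀
    have h := hJ d₀ y₀
    rw [ratioJ, max_le_iff] at h
    constructor <;> linarith [h.1, h.2]
  have h1 := key d₁
  have h2 := key d₂
  have hmul : ∀ p q : ℝ, 0 < p → 0 < q → p / t y₀ ≤ 1 + εbar →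
      t y₀ / q ≤ 1 + εbar → p / q ≤ (1 + εbar) ^ 2 := by
    intro p q hp hq ha hb
    have : p / q = (p / t y₀) * (t y₀ / q) := by
      field_simp
    rw [this, sq]
    exact mul_le_mul ha hb (by positivity) (by linarith)
  rw [ratioJ, max_le_iff]
  constructor
  · linarith [hmul _ _ (hp d₁) (hp d₂) h1.1 h2.2]
  · linarith [hmul _ _ (hp d₂) (hp d₁) h2.1 h1.2]
end

section
/- Consider a dataset of n samples with protected attributes d : {1,…,n} → 𝒟 and labels y : {1,…,n} → 𝒴 (𝒟, 𝒴 finite and nonempty), and nonnegative weights θ : {1,…,n} → ℝ such that for every d₀ ∈ 𝒟 and y₀ ∈ 𝒴 the sums Σ_{i : d_i = d₀} θ_i and Σ_{i : d_i = d₀, y_i = y₀} θ_i are positive. Let ε ≥ 0 and suppose J(p_{θ}(y₀|d₁), p_{θ}(y₀|d₂)) ≤ ε for all d₁, d₂ ∈ 𝒟 and y₀ ∈ 𝒴, where p_{θ}(y₀|d₀) = (Σ_{i : d_i = d₀, y_i = y₀} θ_i)/(Σ_{i : d_i = d₀} θ_i). Define t : 𝒴 → ℝ by t_{y₀} = √(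 (max_{d ∈ 𝒟} p_{θ}(y₀|d)) · (min_{d ∈ 𝒟} p_{θ}(y₀|d)) ). Then t_{y₀} > 0 and J(p_{θ}(y₀|d₀), t_{y₀}) ≤ √(1+ε) − 1 for all d₀ ∈ 𝒟 and y₀ ∈ 𝒴. -/
open Finset

/-- if `J(p_θ(y₀|d₁), p_θ(y₀|d₂)) ≤ ε` for all `d₁, d₂, y₀`, then defining
`t_{y₀} = √((max_d p_θ(y₀|d)) · (min_d p_θ(y₀|d)))` gives `t_{y₀} > 0` and
`J(p_θ(y₀|d₀), t_{y₀}) ≤ √(1+ε) − 1` for all `d₀, y₀`. -/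
theorem stmt18 {D Y : Type*} [Fintype D] [Fintype Y] [Nonempty D] [Nonempty Y]
    [DecidableEq D] [DecidableEq Y]
    (n : ℕ) (d : Fin n → D) (y : Fin n → Y) (θ : Fin n → ℝ) (hθ : ∀ i, 0 ≤ θ i)
    (hden : ∀ d₀ : D, 0 < ∑ i ∈ univ.filter (fun i => d i = d₀), θ i)
    (hnum : ∀ (d₀ : D) (y₀ : Y),
      0 < ∑ i ∈ univ.filter (fun i => d i = d₀ ∧ y i = y₀), θ i)
    (ε : ℝ) (hε : 0 ≤ ε)
    (hJ : ∀ (d₁ d₂ : D) (y₀ : Y),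
      ratioJ (pcond d y θ y₀ d₁) (pcond d y θ y₀ d₂) ≤ ε)
    (t : Y → ℝ)
    (ht : ∀ y₀, t y₀ =
      Real.sqrt ((⨆ d₀ : D, pcond d y θ y₀ d₀) * (⨅ d₀ : D, pcond d y θ y₀ d₀))) :
    ∀ y₀ : Y, 0 < t y₀ ∧
      ∀ d₀ : D, ratioJ (pcond d y θ y₀ d₀) (t y₀) ≤ Real.sqrt (1 + ε) - 1 := by

  intro y₀
  set f : D → ℝ := fun d₀ => pcond d y θ y₀ d₀ with hf
  have hpos : ∀ d₀, 0 < f d₀ := fun d₀ => div_pos (hnum d₀ y₀) (hden d₀)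
  obtain ⟨dM, hdM⟩ := Finite.exists_max f
  obtain ⟨dm, hdm⟩ := Finite.exists_min f
  have hsup : (⨆ d₀ : D, pcond d y θ y₀ d₀) = f dM :=
    le_antisymm (ciSup_le hdM) (le_ciSup (Finite.bddAbove_range f) dM)
  have hinf : (⨅ d₀ : D, pcond d y θ y₀ d₀) = f dm :=
    le_antisymm (ciInf_le (Finite.bddBelow_range f) dm) (le_ciInf hdm)
  set M := f dM with hMdef
  set m := f dm with hmdef
  have hMpos : 0 < M := hpos dM
  have hmpos : 0 < m := hpos dm
  have htval : t y₀ = Real.sqrt (M * m) := by rw [ht y₀, hsup, hinf]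
  have htpos : 0 < t y₀ := by
    rw [htval]; exact Real.sqrt_pos.mpr (mul_pos hMpos hmpos)
  have ht2 : (t y₀) ^ 2 = M * m := by
    rw [htval]; exact Real.sq_sqrt (le_of_lt (mul_pos hMpos hmpos))
  have hMm : M ≤ (1 + ε) * m := by
    have := hJ dM dm y₀
    have h1 : M / m - 1 ≤ ε := le_trans (le_max_left _ _) this
    have : M / m ≤ 1 + ε := by linarith
    calc M = (M / m) * m := by field_simp
    _ ≤ (1 + ε) * m := by nlinarith
  refine ⟨htpos, fun d₀ => ?_⟩
  have hple : f d₀ ≤ M := hdM d₀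
  have hmle : m ≤ f d₀ := hdm d₀
  have hppos : 0 < f d₀ := hpos d₀
  have hsq : 0 ≤ 1 + ε := by linarith
  have key : ∀ x : ℝ, 0 ≤ x → x ^ 2 ≤ 1 + ε → x ≤ Real.sqrt (1 + ε) := by
    intro x hx hx2
    exact (Real.le_sqrt hx hsq).mpr hx2
  have h1 : f d₀ / t y₀ ≤ Real.sqrt (1 + ε) := by
    apply key _ (div_nonneg hppos.le htpos.le)
    rw [div_pow, ht2]
    rw [div_le_iff₀ (mul_pos hMpos hmpos)]
    nlinarith
  have h2 : t y₀ / f d₀ ≤ Real.sqrt (1 + ε) := by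
    apply key _ (div_nonneg htpos.le hppos.le)
    rw [div_pow, ht2]
    rw [div_le_iff₀ (pow_pos hppos 2)]
    nlinarith [mul_le_mul hmle hmle hmpos.le hppos.le,
      mul_le_mul_of_nonneg_right hMm hmpos.le,
      mul_le_mul_of_nonneg_left (mul_le_mul hmle hmle hmpos.le hppos.le) hsq]
  exact max_le (by linarith) (by linarith)
end

section
/- Consider a dataset of n samples with protected attributes d : {1,…,n} → 𝒟 and labels y : {1,…,n} → 𝒴 (𝒟, 𝒴 finite and nonempty). Let W ⊆ Δ_n be the set of weight vectors θ ∈ Δ_n such that for every d₀ ∈ 𝒟 and y₀ ∈ 𝒴 the sums Σ_{i : d_i = d₀} θ_i and Σ_{i : d_i = d₀, y_i = y₀} θ_i are positive. For ε ≥ 0 and t : 𝒴 → ℝ with positive values, define Θ_{ε;t} = {θ ∈ W : J(p_{θ}(y₀|d₀), t_{y₀}) ≤ ε for all d₀ ∈ 𝒟, y₀ ∈ 𝒴}, and define Θ_ε = {θ ∈ W : J(p_{θ}(y₀|d₁), p_{θ}(y₀|d₂)) ≤ ε for all d₁, d₂ ∈ 𝒟, y₀ ∈ 𝒴}. Then for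 every ε ∈ [0, 1), Θ_ε equals the union over all positive t : 𝒴 → (0, 1] of Θ_{ε̄;t}, where ε̄ = √(1+ε) − 1. -/
open Finset

/-- `W`: weight vectors in `Δₙ` for which all group and group-label weighted sums are
positive. -/
def Wset {D Y : Type*} [DecidableEq D] [DecidableEq Y] [Fintype D] [Fintype Y]
    (n : ℕ) (d : Fin n → D) (y : Fin n → Y) : Set (Fin n → ℝ) :=
  {θ | (∀ i, 0 ≤ θ i) ∧ (∑ i, θ i) = (n : ℝ) ∧
    ∀ (d₀ : D) (y₀ : Y), (0 < ∑ i ∈ univ.filter (fun i => d i = d₀), θ i) ∧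
      0 < ∑ i ∈ univ.filter (fun i => d i = d₀ ∧ y i = y₀), θ i}

/-- `Θ_{ε;t}`: weight vectors in `W` satisfying the fairness constraint relative to the
target marginal `t`. -/
def ThetaT {D Y : Type*} [DecidableEq D] [DecidableEq Y] [Fintype D] [Fintype Y]
    (n : ℕ) (d : Fin n → D) (y : Fin n → Y) (ε : ℝ) (t : Y → ℝ) : Set (Fin n → ℝ) :=
  {θ ∈ Wset n d y | ∀ (d₀ : D) (y₀ : Y), ratioJ (pcond d y θ y₀ d₀) (t y₀) ≤ ε}

/-- `Θ_ε`: weight vectors in `W` satisfying the pairwise fairness constraint. -/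
def ThetaPW {D Y : Type*} [DecidableEq D] [DecidableEq Y] [Fintype D] [Fintype Y]
    (n : ℕ) (d : Fin n → D) (y : Fin n → Y) (ε : ℝ) : Set (Fin n → ℝ) :=
  {θ ∈ Wset n d y | ∀ (d₁ d₂ : D) (y₀ : Y),
    ratioJ (pcond d y θ y₀ d₁) (pcond d y θ y₀ d₂) ≤ ε}

/-- for every `ε ∈ [0, 1)`, `Θ_ε` equals the union over all
`t : 𝒴 → (0, 1]` of `Θ_{ε̄;t}`, where `ε̄ = √(1+ε) − 1`. -/
theorem stmt19 {D Y : Type*} [Fintype D] [Fintype Y] [Nonempty D] [Nonempty Y]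
    [DecidableEq D] [DecidableEq Y]
    (n : ℕ) (d : Fin n → D) (y : Fin n → Y) (ε : ℝ) (hε₀ : 0 ≤ ε) (hε₁ : ε < 1) :
    ThetaPW n d y ε =
      ⋃ t ∈ {t : Y → ℝ | ∀ y₀, 0 < t y₀ ∧ t y₀ ≤ 1},
        ThetaT n d y (Real.sqrt (1 + ε) - 1) t := by
  have h1ε : (0:ℝ) < 1 + ε := by linarith
  have hs0 : 0 < Real.sqrt (1 + ε) := Real.sqrt_pos.2 h1ε
  have hssq : Real.sqrt (1 + ε) * Real.sqrt (1 + ε) = 1 + ε := Real.mul_self_sqrt h1ε.le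
  ext θ
  simp only [ThetaPW, ThetaT, Set.mem_iUnion, Set.mem_setOf_eq, Set.sep_setOf,
    exists_prop]
  constructor
  · rintro ⟨hW, hpw⟩
    have hpos : ∀ y₀ d₀, 0 < pcond d y θ y₀ d₀ := fun y₀ d₀ =>
      div_pos (hW.2.2 d₀ y₀).2 (hW.2.2 d₀ y₀).1
    have hle1 : ∀ y₀ d₀, pcond d y θ y₀ d₀ ≤ 1 := by
      intro y₀ d₀
      rw [pcond, div_le_one (hW.2.2 d₀ y₀).1]
      apply Finset.sum_le_sum_of_subset_of_nonneg
      · intro i hi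
        simp only [Finset.mem_filter] at hi ⊢
        exact ⟨hi.1, hi.2.1⟩
      · intro i _ _; exact hW.1 i
    set m : Y → ℝ := fun y₀ => univ.inf' univ_nonempty (fun d₀ => pcond d y θ y₀ d₀)
      with hmdef
    set M : Y → ℝ := fun y₀ => univ.sup' univ_nonempty (fun d₀ => pcond d y θ y₀ d₀)
      with hMdef
    have hm0 : ∀ y₀, 0 < m y₀ := fun y₀ =>
      (Finset.lt_inf'_iff _).2 (fun d₀ _ => hpos y₀ d₀)
    have hM1 : ∀ y₀, M y₀ ≤ 1 := fun y₀ =>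
      Finset.sup'_le _ _ (fun d₀ _ => hle1 y₀ d₀)
    have hmp : ∀ y₀ d₀, m y₀ ≤ pcond d y θ y₀ d₀ := fun y₀ d₀ =>
      Finset.inf'_le _ (Finset.mem_univ d₀)
    have hpM : ∀ y₀ d₀, pcond d y θ y₀ d₀ ≤ M y₀ := fun y₀ d₀ =>
      Finset.le_sup' _ (Finset.mem_univ d₀)
    have hMm : ∀ y₀, M y₀ ≤ (1 + ε) * m y₀ := by
      intro y₀
      obtain ⟨d₁, _, h₁⟩ := Finset.exists_mem_eq_sup' univ_nonempty
        (fun d₀ => pcond d y θ y₀ d₀)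
      obtain ⟨d₂, _, h₂⟩ := Finset.exists_mem_eq_inf' univ_nonempty
        (fun d₀ => pcond d y θ y₀ d₀)
      have hJ := hpw d₁ d₂ y₀
      rw [ratioJ, max_le_iff] at hJ
      have hdiv : pcond d y θ y₀ d₁ / pcond d y θ y₀ d₂ ≤ 1 + ε := by linarith [hJ.1]
      rw [div_le_iff₀ (hpos y₀ d₂)] at hdiv
      rw [hMdef, hmdef]
      simpa [h₁.symm, h₂.symm, mul_comm] using hdiv
    refine ⟨fun y₀ => Real.sqrt (m y₀ * M y₀), fun y₀ => ?_, hW, fun d₀ y₀ => ?_⟩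
    · constructor
      · exact Real.sqrt_pos.2 (mul_pos (hm0 y₀) (lt_of_lt_of_le (hm0 y₀)
          (le_trans (hmp y₀ (Classical.arbitrary D)) (hpM y₀ (Classical.arbitrary D)))))
      · show Real.sqrt (m y₀ * M y₀) ≤ 1
        refine Real.sqrt_le_one.mpr ?_
        nlinarith [hm0 y₀, hM1 y₀, hmp y₀ (Classical.arbitrary D),
          hpM y₀ (Classical.arbitrary D)]
    · have hmM : 0 < m y₀ * M y₀ :=
        mul_pos (hm0 y₀) (lt_of_lt_of_le (hm0 y₀)
          (le_trans (hmp y₀ (Classical.arbitrary D)) (hpM y₀ (Classical.arbitrary D))))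
      have ht0 : 0 < Real.sqrt (m y₀ * M y₀) := Real.sqrt_pos.2 hmM
      have hM0 : 0 < M y₀ := lt_of_lt_of_le (hm0 y₀)
        (le_trans (hmp y₀ (Classical.arbitrary D)) (hpM y₀ (Classical.arbitrary D)))
      rw [ratioJ, max_le_iff]
      constructor
      · rw [sub_le_sub_iff_right, div_le_iff₀ ht0]
        calc pcond d y θ y₀ d₀ ≤ M y₀ := hpM y₀ d₀
          _ = Real.sqrt (M y₀ * M y₀) := (Real.sqrt_mul_self hM0.le).symm
          _ ≤ Real.sqrt ((1 + ε) * (m y₀ * M y₀)) := by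
              apply Real.sqrt_le_sqrt
              nlinarith [hMm y₀]
          _ = Real.sqrt (1 + ε) * Real.sqrt (m y₀ * M y₀) := Real.sqrt_mul h1ε.le _
      · rw [sub_le_sub_iff_right, div_le_iff₀ (hpos y₀ d₀)]
        calc Real.sqrt (m y₀ * M y₀) ≤ Real.sqrt ((1 + ε) * (m y₀ * m y₀)) := by
              apply Real.sqrt_le_sqrt
              nlinarith [hMm y₀, hm0 y₀]
          _ = Real.sqrt (1 + ε) * Real.sqrt (m y₀ * m y₀) := Real.sqrt_mul h1ε.le _
          _ = Real.sqrt (1 + ε) * m y₀ := by rw [Real.sqrt_mul_self (hm0 y₀).le]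
          _ ≤ Real.sqrt (1 + ε) * pcond d y θ y₀ d₀ := by
              exact mul_le_mul_of_nonneg_left (hmp y₀ d₀) hs0.le
  · rintro ⟨t, ht, hW, hT⟩
    have hpos : ∀ y₀ d₀, 0 < pcond d y θ y₀ d₀ := fun y₀ d₀ =>
      div_pos (hW.2.2 d₀ y₀).2 (hW.2.2 d₀ y₀).1
    refine ⟨hW, fun d₁ d₂ y₀ => ?_⟩
    have h₁ := hT d₁ y₀
    have h₂ := hT d₂ y₀
    rw [ratioJ, max_le_iff] at h₁ h₂
    have hb₁ : pcond d y θ y₀ d₁ ≤ Real.sqrt (1 + ε) * t y₀ := by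
      have := h₁.1
      rw [sub_le_sub_iff_right, div_le_iff₀ (ht y₀).1] at this
      linarith [this]
    have hb₂ : t y₀ ≤ Real.sqrt (1 + ε) * pcond d y θ y₀ d₂ := by
      have := h₂.2
      rw [sub_le_sub_iff_right, div_le_iff₀ (hpos y₀ d₂)] at this
      linarith [this]
    have hb₃ : pcond d y θ y₀ d₂ ≤ Real.sqrt (1 + ε) * t y₀ := by
      have := h₂.1
      rw [sub_le_sub_iff_right, div_le_iff₀ (ht y₀).1] at this
      linarith [this]
    have hb₄ : t y₀ ≤ Real.sqrt (1 + ε) * pcond d y θ y₀ d₁ := by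
      have := h₁.2
      rw [sub_le_sub_iff_right, div_le_iff₀ (hpos y₀ d₁)] at this
      linarith [this]
    rw [ratioJ, max_le_iff]
    constructor
    · rw [sub_le_iff_le_add, div_le_iff₀ (hpos y₀ d₂)]
      nlinarith [hb₁, hb₂, hs0, (ht y₀).1]
    · rw [sub_le_iff_le_add, div_le_iff₀ (hpos y₀ d₁)]
      nlinarith [hb₃, hb₄, hs0, (ht y₀).1]
end
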